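/- For 2 ≤ k ≤ l, the element w_{k,l} ∈ S_n with reduced word s_k s_{k-1} s_{k+1} s_k s_{k+2} s_{k+1} ⋯ s_l s_{l-1} equals, as a permutation in one-line notation, [1, 2, ..., k−2, k+1, k+2, ..., l+1, k−1, k, l+2, ..., n], and this permutation is 321-avoiding. -/

import Mathlib

open Polynomial

/-- The simple transposition `s_i = (i, i+1)` (1-based) in `S_n`, acting on `Fin n`
(0-based positions `i-1` and `i`); equals `1` if `i` is out of range. -/
def gen (n : ℕ) (i : ℕ) : Equiv.Perm (Fin n) :=
  if h : 1 ≤ i ∧ i < n then Equiv.swap ⟨i - 1, by omega⟩ ⟨i, h.2⟩ else 1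

/-- Product of the word `l` of generator indices. -/
def wordProd (n : ℕ) (l : List ℕ) : Equiv.Perm (Fin n) :=
  (l.map (gen n)).prod

/-- Coxeter length of `w ∈ S_n`. -/
noncomputable def len (n : ℕ) (w : Equiv.Perm (Fin n)) : ℕ :=
  sInf {r | ∃ l : List ℕ, (∀ i ∈ l, 1 ≤ i ∧ i < n) ∧ wordProd n l = w ∧ l.length = r}

/-- `l` is a reduced word for `w`. -/
def IsReducedWord (n : ℕ) (w : Equiv.Perm (Fin n)) (l : List ℕ) : Prop :=
  (∀ i ∈ l, 1 ≤ i ∧ i < n) ∧ wordProd n l = w ∧ l.length = len n w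

/-- Bruhat-Chevalley order: `x ≤ w` iff every reduced word for `w` contains a
subword whose product is `x`. -/
def Bruhat (n : ℕ) (x w : Equiv.Perm (Fin n)) : Prop :=
  ∀ l, IsReducedWord n w l → ∃ t, t.Sublist l ∧ wordProd n t = x

/-- `w` is 321-avoiding: no `i < j < k` with `w i > w j > w k`. -/
def Avoids321 (n : ℕ) (w : Equiv.Perm (Fin n)) : Prop :=
  ¬ ∃ i j k : Fin n, i < j ∧ j < k ∧ w j < w i ∧ w k < w j

/-- Product of the subword of `l` selected by the mask `S` (set of selected positions). -/
def maskProd (n : ℕ) (l : List ℕ) (S : Finset ℕ) : Equiv.Perm (Fin n) :=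
  wordProd n (((List.range l.length).filter (fun j => decide (j ∈ S))).map (fun j => l.getD j 0))

/-- Position `j` of the word `l` is a defect of the mask `S`. -/
noncomputable def IsDefect (n : ℕ) (l : List ℕ) (S : Finset ℕ) (j : ℕ) : Prop :=
  len n (maskProd n (l.take j) S * gen n (l.getD j 0)) < len n (maskProd n (l.take j) S)

/-- The defect set `D(σ)` of the mask `S` on the word `l`. -/
noncomputable def defectSet (n : ℕ) (l : List ℕ) (S : Finset ℕ) : Finset ℕ :=
  (Finset.range l.length).filter (fun j =>
    len n (maskProd n (l.take j) S * gen n (l.getD j 0)) < len n (maskProd n (l.take j) S))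

/-- Deodhar's defect generating polynomial `P_x(a) = Σ_{σ : π(w^σ) = x} q^{|D(σ)|}`. -/
noncomputable def defPoly (n : ℕ) (l : List ℕ) (x : Equiv.Perm (Fin n)) : Polynomial ℤ :=
  ∑ S ∈ (Finset.range l.length).powerset,
    if maskProd n l S = x then (X : Polynomial ℤ) ^ (defectSet n l S).card else 0


/-- The word `s_k s_{k-1} s_{k+1} s_k ⋯ s_l s_{l-1}` for `w_{k,l}`. -/
def wklWord (k l : ℕ) : List ℕ :=
  (List.range (l - k + 1)).flatMap (fun m => [k + m, k + m - 1])


open Finset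

/-!
Appending the letters `s_{l+1} s_l` to a word for `w_{k,l}` shifts the block of values
`k - 1, k` one place to the right, which gives the one-line notation by induction on `l`.
In that notation the inversions of `w_{k,l}` are exactly the pairs of positions `(i, j)` with
`k - 1 ≤ i ≤ l - 1` and `j ∈ {l, l + 1}` (1-based), so there are `2 (l - k + 1)` of them, as
many as letters in the word. Since multiplying by an adjacent transposition changes the number
of inversions by at most one, no shorter word exists. Every inversion straddles the cut between
positions `l - 1` and `l`, so no two inversions chain into a `321` pattern.
-/

lemma wordProd_append (n : ℕ) (t u : List ℕ) :
    wordProd n (t ++ u) = wordProd n t * wordProd n u := by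
  simp [wordProd]

lemma wordProd_pair (n a b : ℕ) : wordProd n [a, b] = gen n a * gen n b := by
  simp [wordProd]

lemma gen_eq_swap {n i : ℕ} (h1 : 1 ≤ i) (h2 : i < n) :
    gen n i = Equiv.swap ⟨i - 1, by omega⟩ ⟨i, h2⟩ := by
  rw [gen, dif_pos ⟨h1, h2⟩]

lemma coe_gen_apply {n i : ℕ} (h1 : 1 ≤ i) (h2 : i < n) (x : Fin n) :
    (gen n i x : ℕ) = if (x : ℕ) = i - 1 then i else if (x : ℕ) = i then i - 1 else x := by
  rw [gen_eq_swap h1 h2, Equiv.swap_apply_def]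
  split_ifs <;> simp only [Fin.ext_iff] at * <;> omega

def inversions {n : ℕ} (w : Equiv.Perm (Fin n)) : Finset (Fin n × Fin n) :=
  univ.filter fun p => p.1 < p.2 ∧ w p.2 < w p.1

lemma mem_inversions {n : ℕ} {w : Equiv.Perm (Fin n)} {p : Fin n × Fin n} :
    p ∈ inversions w ↔ p.1 < p.2 ∧ w p.2 < w p.1 := by
  simp [inversions]

lemma inversions_one (n : ℕ) : inversions (1 : Equiv.Perm (Fin n)) = ∅ :=
  eq_empty_of_forall_notMem fun _ h => lt_asymm (mem_inversions.mp h).1 (mem_inversions.mp h).2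

lemma swap_lt_swap_of_ne {n : ℕ} {a b x y : Fin n} (hab : (b : ℕ) = a + 1) (hxy : x < y)
    (hne : (x, y) ≠ (a, b)) : Equiv.swap a b x < Equiv.swap a b y := by
  rw [Equiv.swap_apply_def, Equiv.swap_apply_def]
  split_ifs <;> simp only [Fin.lt_def, Fin.ext_iff, ne_eq, Prod.mk.injEq, not_and] at * <;> omega

/-- Relabelling positions by `s` maps the inversions of `w * s` other than `(a, b)` injectively
into those of `w`. -/
lemma card_inversions_mul_swap_le {n : ℕ} (w : Equiv.Perm (Fin n)) {a b : Fin n}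
    (hab : (b : ℕ) = a + 1) :
    #(inversions (w * Equiv.swap a b)) ≤ #(inversions w) + 1 := by
  set s := Equiv.swap a b
  have hmaps : ∀ p ∈ (inversions (w * s)).erase (a, b), (s p.1, s p.2) ∈ inversions w := by
    rintro ⟨x, y⟩ hp
    simp only [mem_erase, mem_inversions, Equiv.Perm.mul_apply] at hp ⊢
    exact ⟨swap_lt_swap_of_ne hab hp.2.1 hp.1, hp.2.2⟩
  have hinj : Set.InjOn (fun p : Fin n × Fin n => (s p.1, s p.2))
      ((inversions (w * s)).erase (a, b)) := by
    intro p _ q _ h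
    simp only [Prod.mk.injEq] at h
    exact Prod.ext (s.injective h.1) (s.injective h.2)
  calc #(inversions (w * s))
      ≤ #((inversions (w * s)).erase (a, b)) + 1 :=
        Nat.sub_le_iff_le_add.mp pred_card_le_card_erase
    _ ≤ #(inversions w) + 1 := Nat.add_le_add_right (card_le_card_of_injOn _ hmaps hinj) 1

lemma card_inversions_wordProd_le {n : ℕ} {t : List ℕ} (ht : ∀ i ∈ t, 1 ≤ i ∧ i < n) :
    #(inversions (wordProd n t)) ≤ t.length := by
  induction t using List.reverseRecOn with
  | nil => simp [wordProd, inversions_one]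
  | append_singleton t a ih =>
    obtain ⟨ha1, ha2⟩ := ht a (by simp)
    have hw :
        wordProd n (t ++ [a]) = wordProd n t * Equiv.swap ⟨a - 1, by omega⟩ ⟨a, ha2⟩ := by
      rw [wordProd_append, ← gen_eq_swap ha1 ha2]
      simp [wordProd]
    calc #(inversions (wordProd n (t ++ [a])))
        ≤ #(inversions (wordProd n t)) + 1 := by
          rw [hw]
          exact card_inversions_mul_swap_le _ (by simp only; omega)
      _ ≤ t.length + 1 := by gcongr; exact ih fun i hi => ht i (by simp [hi])
      _ = (t ++ [a]).length := by simp

theorem isReducedWord_of_length_le_card_inversions {n : ℕ} {t : List ℕ}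
    (ht : ∀ i ∈ t, 1 ≤ i ∧ i < n) (hcard : t.length ≤ #(inversions (wordProd n t))) :
    IsReducedWord n (wordProd n t) t := by
  refine ⟨ht, rfl, le_antisymm ?_ (Nat.sInf_le ⟨t, ht, rfl, rfl⟩)⟩
  refine le_csInf ⟨_, t, ht, rfl, rfl⟩ ?_
  rintro _ ⟨u, hu, hprod, rfl⟩
  calc t.length ≤ #(inversions (wordProd n t)) := hcard
    _ = #(inversions (wordProd n u)) := by rw [hprod]
    _ ≤ u.length := card_inversions_wordProd_le hu

lemma avoids321_of_inversions_straddle {n : ℕ} {w : Equiv.Perm (Fin n)} (c : ℕ)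
    (h : ∀ x y : Fin n, x < y → w y < w x → (x : ℕ) < c ∧ c ≤ y) : Avoids321 n w := by
  rintro ⟨i, j, m, hij, hjm, hji, hmj⟩
  have := h i j hij hji
  have := h j m hjm hmj
  omega

/-- `[1, ..., k-2, k+1, ..., l+1, k-1, k, l+2, ..., n]`, with positions and values shifted to
start at `0`. -/
def wklOneLine (k l i : ℕ) : ℕ :=
  if i + 3 ≤ k then i
  else if i + 2 ≤ l then i + 2
  else if i + 1 = l then k - 2
  else if i = l then k - 1
  else i

section Wkl

variable {n k l : ℕ}

lemma wklWord_self : wklWord k k = [k, k - 1] := by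
  simp [wklWord]

lemma wklWord_succ (h : k ≤ l) : wklWord k (l + 1) = wklWord k l ++ [l + 1, l] := by
  have hlast : k + (l - k + 1) = l + 1 := by omega
  rw [wklWord, show l + 1 - k + 1 = l - k + 1 + 1 by omega, List.range_succ,
    List.flatMap_append, ← wklWord]
  simp [hlast]

lemma wklWord_length : (wklWord k l).length = 2 * (l - k + 1) := by
  simp [wklWord, List.length_flatMap, mul_comm]

lemma mem_wklWord {i : ℕ} (hkl : k ≤ l) (h : i ∈ wklWord k l) : k - 1 ≤ i ∧ i ≤ l := by
  simp only [wklWord, List.mem_flatMap, List.mem_range, List.mem_cons, List.not_mem_nil,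
    or_false] at h
  obtain ⟨m, hm, rfl | rfl⟩ := h <;> omega

theorem wordProd_wklWord_apply (h2 : 2 ≤ k) (hkl : k ≤ l) (hln : l < n)
    (i : Fin n) : (wordProd n (wklWord k l) i : ℕ) = wklOneLine k l i := by
  induction l, hkl using Nat.le_induction generalizing i with
  | base =>
    rw [wklWord_self, wordProd_pair, Equiv.Perm.mul_apply, coe_gen_apply (by omega) hln,
      coe_gen_apply (by omega) (by omega)]
    unfold wklOneLine
    split_ifs <;> omega
  | succ l hkl ih =>
    have hstep : (gen n (l + 1) (gen n l i) : ℕ) =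
        if (i : ℕ) = l - 1 then l + 1 else if (i : ℕ) = l then l - 1
        else if (i : ℕ) = l + 1 then l else i := by
      rw [coe_gen_apply (by omega) hln, coe_gen_apply (by omega) (by omega)]
      split_ifs <;> omega
    rw [wklWord_succ hkl, wordProd_append, wordProd_pair, Equiv.Perm.mul_apply,
      Equiv.Perm.mul_apply, ih (by omega), hstep]
    unfold wklOneLine
    split_ifs <;> omega

lemma wkl_inversion_iff (h2 : 2 ≤ k) (hkl : k ≤ l) (hln : l < n) (x y : Fin n) :
    (x < y ∧ wordProd n (wklWord k l) y < wordProd n (wklWord k l) x) ↔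
      k - 2 ≤ (x : ℕ) ∧ (x : ℕ) ≤ l - 2 ∧ ((y : ℕ) = l - 1 ∨ (y : ℕ) = l) := by
  rw [Fin.lt_def, Fin.lt_def, wordProd_wklWord_apply h2 hkl hln,
    wordProd_wklWord_apply h2 hkl hln]
  have := x.isLt
  have := y.isLt
  unfold wklOneLine
  split_ifs <;> omega

lemma inversions_wkl (h2 : 2 ≤ k) (hkl : k ≤ l) (hln : l < n) :
    inversions (wordProd n (wklWord k l)) =
      Icc (⟨k - 2, by omega⟩ : Fin n) ⟨l - 2, by omega⟩ ×ˢ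
        {⟨l - 1, by omega⟩, ⟨l, hln⟩} := by
  ext ⟨x, y⟩
  simp only [mem_inversions, mem_product, mem_Icc, mem_insert, mem_singleton, Fin.le_def,
    Fin.ext_iff, wkl_inversion_iff h2 hkl hln, and_assoc]

lemma card_inversions_wkl (h2 : 2 ≤ k) (hkl : k ≤ l) (hln : l < n) :
    #(inversions (wordProd n (wklWord k l))) = 2 * (l - k + 1) := by
  rw [inversions_wkl h2 hkl hln, card_product, Fin.card_Icc,
    card_pair (by simp [Fin.ext_iff]; omega)]
  simp only
  omega

end Wkl

/-- for `2 ≤ k ≤ l < n`, the word `s_k s_{k-1} s_{k+1} s_k ⋯ s_l s_{l-1}` is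
reduced, its product `w_{k,l}` has one-line notation
`[1, ..., k-2, k+1, ..., l+1, k-1, k, l+2, ..., n]`, and `w_{k,l}` is 321-avoiding. -/
theorem stmt12 (n k l : ℕ) (h2 : 2 ≤ k) (hkl : k ≤ l) (hln : l < n) :
    IsReducedWord n (wordProd n (wklWord k l)) (wklWord k l) ∧
    (∀ i : Fin n, ((wordProd n (wklWord k l)) i : ℕ) =
      if (i : ℕ) + 3 ≤ k then (i : ℕ)
      else if (i : ℕ) + 2 ≤ l then (i : ℕ) + 2
      else if (i : ℕ) + 1 = l then k - 2
      else if (i : ℕ) = l then k - 1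
      else (i : ℕ)) ∧
    Avoids321 n (wordProd n (wklWord k l)) := by
  refine ⟨?_, wordProd_wklWord_apply h2 hkl hln, ?_⟩
  · refine isReducedWord_of_length_le_card_inversions (fun i hi => ?_) ?_
    · have := mem_wklWord hkl hi
      omega
    · rw [wklWord_length, card_inversions_wkl h2 hkl hln]
  · refine avoids321_of_inversions_straddle (l - 1) fun x y hxy hw => ?_
    have := (wkl_inversion_iff h2 hkl hln x y).mp ⟨hxy, hw⟩
    omega
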